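/- For d odd and n ≥ 1, the global momentum state |P_G; d^{n-1}⟩ = F_G|X; d^{n-1}⟩ equals the local momentum state |P_L; 1,0,...,0⟩ = F_L|X;1,0,...,0⟩, i.e., ⟨P_L;1,0,...,0|P_G; d^{n-1}⟩ = 1. -/

import Mathlib

open Matrix

/-- `ω m a = exp(2πi a / m)` for `a : ZMod m`. -/
noncomputable def ω (m : ℕ) (a : ZMod m) : ℂ :=
  Complex.exp (2 * (Real.pi : ℂ) * Complex.I * (a.val : ℂ) / (m : ℂ))

/-- The finite Fourier transform matrix `F_{jk} = ω_d(jk)/√d`. -/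
noncomputable def Fmat (d : ℕ) [NeZero d] : Matrix (ZMod d) (ZMod d) ℂ :=
  fun j k => (1 / (Real.sqrt d : ℂ)) * ω d (j * k)


/-- The symmetric-interval representative of `x : ZMod d`, lying in `[-(d-1)/2, (d-1)/2]`
for odd `d`. -/
def valMin (d : ℕ) (x : ZMod d) : ℤ :=
  if (x.val : ℤ) ≤ ((d : ℤ) - 1) / 2 then (x.val : ℤ) else (x.val : ℤ) - d

/-- The map `(j₀,...,j_{n-1}) ↦ j₀ + j₁ d + ... + j_{n-1} d^{n-1} (mod dⁿ)`,
using symmetric representatives. -/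
def encMap (d n : ℕ) [NeZero d] (j : Fin n → ZMod d) : ZMod (d ^ n) :=
  ((∑ r : Fin n, valMin d (j r) * (d : ℤ) ^ (r : ℕ) : ℤ) : ZMod (d ^ n))

/-- The local Fourier transform `F_L = F ⊗ ... ⊗ F` on the n-fold tensor basis. -/
noncomputable def FLmat (d n : ℕ) [NeZero d] :
    Matrix (Fin n → ZMod d) (Fin n → ZMod d) ℂ :=
  fun j k => ∏ r : Fin n, Fmat d (j r) (k r)

/-!
Every entry involved is `d^{-n/2}` times a root of unity. On the global side the column index
`d^{n-1}` turns the row index `k = j₀ + j₁ d + ⋯` into the phase `k d^{n-1} / d^n = k / d`,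
which only depends on `k mod d = j₀`. On the local side `F^{⊗n}` multiplies the characters
`ω_d(j_r k_r)`, which combine into `ω_d(∑ j_r k_r) = ω_d(j₀)` at `k = (1, 0, …, 0)`.
-/

theorem ω_eq_stdAddChar (m : ℕ) [NeZero m] (a : ZMod m) : ω m a = ZMod.stdAddChar a := by
  rw [ZMod.stdAddChar_apply, ZMod.toCircle_apply, ω]

theorem ω_intCast (m : ℕ) [NeZero m] (a : ℤ) :
    ω m a = Complex.exp (2 * Real.pi * Complex.I * a / m) := by
  rw [ω_eq_stdAddChar, ZMod.stdAddChar_coe]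

theorem ω_sum (m : ℕ) [NeZero m] {ι : Type*} (s : Finset ι) (f : ι → ZMod m) :
    ω m (∑ i ∈ s, f i) = ∏ i ∈ s, ω m (f i) := by
  simp only [ω_eq_stdAddChar]
  induction s using Finset.cons_induction with
  | empty => exact AddChar.map_zero_eq_one _
  | cons i s hi ih => rw [Finset.sum_cons, Finset.prod_cons, AddChar.map_add_eq_mul, ih]

theorem ω_intCast_mul_of_eq_mul {N d e : ℕ} [NeZero N] [NeZero d] (h : N = d * e) (a : ℤ) :
    ω N ((a * e : ℤ) : ZMod N) = ω d a := by
  have he : (e : ℂ) ≠ 0 := by exact_mod_cast right_ne_zero_of_mul (h ▸ NeZero.ne N)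
  rw [ω_intCast, ω_intCast, h]
  push_cast
  congr 1
  field_simp

theorem Real.sqrt_pow_of_nonneg {x : ℝ} (hx : 0 ≤ x) (n : ℕ) : √(x ^ n) = √x ^ n := by
  rw [Real.sqrt_eq_iff_eq_sq (by positivity) (by positivity), ← pow_mul, mul_comm, pow_mul,
    Real.sq_sqrt hx]

theorem FLmat_apply (d n : ℕ) [NeZero d] (j k : Fin n → ZMod d) :
    FLmat d n j k = (1 / (Real.sqrt d : ℂ)) ^ n * ω d (∑ r, j r * k r) := by
  simp only [FLmat, Fmat, Finset.prod_mul_distrib, ω_sum, Finset.prod_const, Finset.card_univ,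
    Fintype.card_fin]

theorem valMin_intCast (d : ℕ) [NeZero d] (x : ZMod d) : (valMin d x : ZMod d) = x := by
  unfold valMin
  split_ifs <;> simp

theorem intCast_sum_valMin_mul_pow (d n : ℕ) [NeZero d] (x : Fin n → ZMod d) :
    ((∑ r : Fin n, valMin d (x r) * (d : ℤ) ^ (r : ℕ) : ℤ) : ZMod d) =
      ∑ r : Fin n, x r * if (r : ℕ) = 0 then 1 else 0 := by
  simp [valMin_intCast, zero_pow_eq]

theorem stmt11_general (d n : ℕ) [NeZero d] [NeZero (d ^ n)] (hn : 1 ≤ n) :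
    ∀ x : Fin n → ZMod d,
      (Fmat (d ^ n)).mulVec
          (Pi.single ((d : ZMod (d ^ n)) ^ (n - 1)) 1 : ZMod (d ^ n) → ℂ)
          (encMap d n x) =
        (FLmat d n).mulVec
          (Pi.single (fun r : Fin n => if (r : ℕ) = 0 then 1 else 0) 1 :
            (Fin n → ZMod d) → ℂ) x := by
  intro x
  have hindex : encMap d n x * (d : ZMod (d ^ n)) ^ (n - 1) =
      (((∑ r : Fin n, valMin d (x r) * (d : ℤ) ^ (r : ℕ)) * (d ^ (n - 1) : ℕ) : ℤ) :
        ZMod (d ^ n)) := by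
    rw [encMap]
    push_cast
    rfl
  have hpow : d ^ n = d * d ^ (n - 1) := by rw [← pow_succ', Nat.sub_add_cancel hn]
  rw [mulVec_single_one, mulVec_single_one, col_apply, col_apply, Fmat, FLmat_apply, hindex,
    ω_intCast_mul_of_eq_mul hpow, intCast_sum_valMin_mul_pow, Nat.cast_pow,
    Real.sqrt_pow_of_nonneg d.cast_nonneg, Complex.ofReal_pow, _root_.one_div_pow]

/-- The global momentum state `|P_G; d^{n-1}⟩` equals the local momentum state
`|P_L; 1,0,...,0⟩`. -/
theorem stmt11 (d n : ℕ) [NeZero d] [NeZero (d ^ n)] (hd : Odd d) (hn : 1 ≤ n) :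
    ∀ x : Fin n → ZMod d,
      (Fmat (d ^ n)).mulVec
          (Pi.single ((d : ZMod (d ^ n)) ^ (n - 1)) 1 : ZMod (d ^ n) → ℂ)
          (encMap d n x) =
        (FLmat d n).mulVec
          (Pi.single (fun r : Fin n => if (r : ℕ) = 0 then 1 else 0) 1 :
            (Fin n → ZMod d) → ℂ) x :=
  stmt11_general d n hn
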